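/- arXiv:2012.14743 — 9 statements merged into one kernel-verified Lean document; each statement's English description precedes it below -/
import Mathlib

section
/- Let (ι, D, par, ρ, K) be a discrete Bayesian network. Then the factorized joint is a probability distribution on full assignments: ∑_{t : ∀ i, D i} ∏_{i : ι} K i t (t i) = 1. -/
open scoped NNReal
open Finset

theorem bayes_aux
    {ι : Type*} [Fintype ι] [DecidableEq ι]
    (D : ι → Type*) [∀ i, Fintype (D i)] [∀ i, Nonempty (D i)] [∀ i, DecidableEq (D i)]
    (par : ι → Finset ι) (ρ : ι → ℕ)
    (hacyc : ∀ i, ∀ j ∈ par i, ρ j < ρ i)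
    (K : ∀ i, (∀ j, D j) → D i → ℝ≥0)
    (hloc : ∀ i, ∀ t t' : ∀ j, D j, (∀ j ∈ par i, t j = t' j) → ∀ v, K i t v = K i t' v)
    (hnorm : ∀ i, ∀ t : ∀ j, D j, ∑ v, K i t v = 1) :
    ∀ S : Finset ι, ∀ t : ∀ i, D i,
      ∑ g ∈ Fintype.piFinset (fun i => if i ∈ S then (Finset.univ : Finset (D i)) else {t i}),
        ∏ i ∈ S, K i g (g i) = 1 := by
  intro S
  induction S using Finset.strongInduction with
  | _ S ih =>
    intro t
    rcases S.eq_empty_or_nonempty with rfl | hS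
    · have h1 : Fintype.piFinset
          (fun i => if i ∈ (∅ : Finset ι) then (Finset.univ : Finset (D i)) else {t i}) = {t} := by
        ext g
        simp [Fintype.mem_piFinset, funext_iff]
      rw [h1]; simp
    · obtain ⟨a, ha, hmax⟩ := S.exists_max_image ρ hS
      set S' := S.erase a with hS'def
      have haS' : a ∉ S' := Finset.notMem_erase a S
      have hins : insert a S' = S := Finset.insert_erase ha
      have key : ∑ g ∈ Fintype.piFinset (fun i => if i ∈ S then (Finset.univ : Finset (D i)) else {t i}),
            ∏ i ∈ S, K i g (g i)
          = ∑ p ∈ (Finset.univ : Finset (D a)) ×ˢ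
              Fintype.piFinset (fun i => if i ∈ S' then (Finset.univ : Finset (D i)) else {t i}),
              (∏ i ∈ S', K i p.2 (p.2 i)) * K a p.2 p.1 := by
        apply Finset.sum_bij' (fun g _ => ((g a, Function.update g a (t a)) : D a × (∀ i, D i)))
          (fun p _ => Function.update p.2 a p.1)
        · intro g hg
          simp only [Fintype.mem_piFinset] at hg ⊢
          refine Finset.mem_product.2 ⟨Finset.mem_univ _, Fintype.mem_piFinset.2 fun i => ?_⟩
          by_cases hi : i ∈ S'
          · simp [hi]
          · simp only [hi, if_neg, if_false]
            by_cases hia : i = a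
            · subst hia; simp
            · rw [Function.update_of_ne hia]
              have hiS : i ∉ S := fun h => hi (Finset.mem_erase.2 ⟨hia, h⟩)
              have := hg i
              simpa [hiS] using this
        · intro p hp
          obtain ⟨hp1, hp2⟩ := Finset.mem_product.1 hp
          rw [Fintype.mem_piFinset] at hp2 ⊢
          intro i
          by_cases hi : i ∈ S
          · simp [hi]
          · have hia : i ≠ a := fun h => hi (h ▸ ha)
            have hiS' : i ∉ S' := fun h => hi (Finset.mem_of_mem_erase h)
            rw [Function.update_of_ne hia]
            have := hp2 i
            simpa [hiS', hi] using this
        · intro g hg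
          simp [Function.update_idem, Function.update_eq_self]
        · intro p hp
          obtain ⟨hp1, hp2⟩ := Finset.mem_product.1 hp
          rw [Fintype.mem_piFinset] at hp2
          have hpa : p.2 a = t a := by simpa [haS'] using hp2 a
          have hself : Function.update p.2 a (t a) = p.2 := by
            rw [← hpa, Function.update_eq_self]
          ext <;> simp [Function.update_idem, hself]
        · intro g hg
          rw [Fintype.mem_piFinset] at hg
          rw [← hins, Finset.prod_insert haS']
          have hupd : ∀ j, j ≠ a → Function.update g a (t a) j = g j := by
            intro j hj; rw [Function.update_of_ne hj]
          have h2 : ∏ i ∈ S', K i g (g i) = ∏ i ∈ S', K i (Function.update g a (t a))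
              ((Function.update g a (t a)) i) := by
            refine Finset.prod_congr rfl fun i hiS' => ?_
            have hia : i ≠ a := (Finset.mem_erase.1 hiS').1
            rw [hupd i hia]
            exact hloc i g (Function.update g a (t a)) (fun j hj => by
              have : ρ j < ρ i := hacyc i j hj
              have hja : j ≠ a := by
                intro h; subst h
                exact absurd (hmax i (Finset.mem_of_mem_erase hiS')) (not_le.2 this)
              exact (hupd j hja).symm) (g i)
          have h3 : K a g (g a) = K a (Function.update g a (t a)) (g a) := by
            refine hloc a g _ (fun j hj => ?_) (g a)
            have hja : j ≠ a := fun h => absurd (hacyc a j hj) (h ▸ lt_irrefl _)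
            exact (hupd j hja).symm
          rw [h2, h3, mul_comm]
      rw [key, Finset.sum_product_right]
      have hss : S' ⊂ S := Finset.erase_ssubset ha
      calc ∑ g ∈ Fintype.piFinset (fun i => if i ∈ S' then (Finset.univ : Finset (D i)) else {t i}),
              ∑ v : D a, (∏ i ∈ S', K i g (g i)) * K a g v
          = ∑ g ∈ Fintype.piFinset (fun i => if i ∈ S' then (Finset.univ : Finset (D i)) else {t i}),
              ∏ i ∈ S', K i g (g i) := by
            refine Finset.sum_congr rfl fun g _ => ?_
            rw [← Finset.mul_sum, hnorm a g, mul_one]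
        _ = 1 := ih S' hss t

/-- The factorized joint distribution of a discrete Bayesian network
(finite nonempty domains, acyclic parent map witnessed by a rank function, locality and
normalization of conditional probability tables) sums to `1` over all full assignments. -/
theorem bayes_net_joint_sums_to_one
    {ι : Type*} [Fintype ι] [DecidableEq ι]
    (D : ι → Type*) [∀ i, Fintype (D i)] [∀ i, Nonempty (D i)] [∀ i, DecidableEq (D i)]
    (par : ι → Finset ι) (ρ : ι → ℕ)
    (hacyc : ∀ i, ∀ j ∈ par i, ρ j < ρ i)
    (K : ∀ i, (∀ j, D j) → D i → ℝ≥0)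
    (hloc : ∀ i, ∀ t t' : ∀ j, D j, (∀ j ∈ par i, t j = t' j) → ∀ v, K i t v = K i t' v)
    (hnorm : ∀ i, ∀ t : ∀ j, D j, ∑ v, K i t v = 1) :
    ∑ t : ∀ i, D i, ∏ i, K i t (t i) = 1 := by
  have t0 : ∀ i, D i := fun i => Classical.arbitrary (D i)
  have h := bayes_aux D par ρ hacyc K hloc hnorm Finset.univ t0
  have hpi : Fintype.piFinset
      (fun i => if i ∈ (Finset.univ : Finset ι) then (Finset.univ : Finset (D i)) else {t0 i})
      = (Finset.univ : Finset (∀ i, D i)) := by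
    simp
  rw [hpi] at h
  exact h
end

section
/- (Theorem 1, graph reduction, equality queries.) Let (ι, D, par, ρ, K) be a discrete Bayesian network, let Q_V ⊆ ι be a set of query attributes with target values v : ∀ i, D i, let A ⊆ ι be any parent-closed set with Q_V ⊆ A (e.g. the ancestral closure of Q_V), and fix any default full assignment t₀. Then the probability of the equality query computed on the full network equals the probability computed on the reduced network on A: ∑ over full assignments u with u i = v i for all i ∈ Q_V of ∏_{i : ι} K i u (u i) equals ∑ over full assignments u with u i = v i for all i ∈ Q_V and u i = t₀ i for all i ∉ A of ∏_{i ∈ A} K i u (u i). -/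
open scoped NNReal
open Finset

lemma bn_ext_sum
    {ι : Type*} [Fintype ι] [DecidableEq ι]
    (D : ι → Type*) [∀ i, Fintype (D i)] [∀ i, DecidableEq (D i)]
    (par : ι → Finset ι) (ρ : ι → ℕ)
    (hacyc : ∀ i, ∀ j ∈ par i, ρ j < ρ i)
    (K : ∀ i, (∀ j, D j) → D i → ℝ≥0)
    (hloc : ∀ i, ∀ t t' : ∀ j, D j, (∀ j ∈ par i, t j = t' j) → ∀ v, K i t v = K i t' v)
    (hnorm : ∀ i, ∀ t : ∀ j, D j, ∑ v, K i t v = 1)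
    (S : Finset ι) : ∀ t : ∀ i, D i,
    ∑ u ∈ Finset.univ.filter (fun u : ∀ i, D i => ∀ j ∉ S, u j = t j),
      ∏ j ∈ S, K j u (u j) = 1 := by
  induction S using Finset.strongInduction with
  | _ S ih =>
    intro t
    rcases S.eq_empty_or_nonempty with rfl | hS
    · have : Finset.univ.filter (fun u : ∀ i, D i => ∀ j ∉ (∅ : Finset ι), u j = t j) = {t} := by
        ext u
        simp [funext_iff]
      rw [this]
      simp
    · obtain ⟨i, hiS, hmax⟩ := S.exists_max_image ρ hS
      have hnp : ∀ j ∈ S, i ∉ par j := by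
        intro j hj hij
        exact absurd (hacyc j i hij) (not_lt.2 (hmax j hj))
      have key : ∑ u ∈ Finset.univ.filter (fun u : ∀ i, D i => ∀ j ∉ S, u j = t j),
          ∏ j ∈ S, K j u (u j)
        = ∑ p ∈ (Finset.univ.filter
              (fun u : ∀ i, D i => ∀ j ∉ S.erase i, u j = t j)) ×ˢ (Finset.univ : Finset (D i)),
            K i p.1 p.2 * ∏ j ∈ S.erase i, K j p.1 (p.1 j) := by
        apply Finset.sum_nbij' (i := fun u => (Function.update u i (t i), u i))
          (j := fun p => Function.update p.1 i p.2)
        · intro u hu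
          simp only [Finset.mem_filter, Finset.mem_univ, true_and] at hu ⊢
          rw [Finset.mem_product]
          refine ⟨?_, Finset.mem_univ _⟩
          simp only [Finset.mem_filter, Finset.mem_univ, true_and]
          intro j hj
          by_cases hji : j = i
          · subst hji; simp [Function.update_self]
          · rw [Function.update_of_ne hji]
            exact hu j (fun h => hj (Finset.mem_erase.2 ⟨hji, h⟩))
        · intro p hp
          rw [Finset.mem_product] at hp
          obtain ⟨hp1, _⟩ := hp
          simp only [Finset.mem_filter, Finset.mem_univ, true_and] at hp1 ⊢
          intro j hj
          have hji : j ≠ i := fun h => hj (h ▸ hiS)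
          rw [Function.update_of_ne hji]
          exact hp1 j (fun h => hj (Finset.mem_of_mem_erase h))
        · intro u hu
          simp only [Finset.mem_filter, Finset.mem_univ, true_and] at hu
          funext j
          by_cases hji : j = i
          · subst hji; simp [Function.update_self]
          · simp [Function.update_of_ne hji]
        · intro p hp
          rw [Finset.mem_product] at hp
          obtain ⟨hp1, _⟩ := hp
          simp only [Finset.mem_filter, Finset.mem_univ, true_and] at hp1
          refine Prod.ext ?_ (Function.update_self _ _ _)
          funext j
          dsimp only
          by_cases hji : j = i
          · subst hji
            rw [Function.update_self]
            exact (hp1 j (Finset.notMem_erase j S)).symm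
          · rw [Function.update_of_ne hji, Function.update_of_ne hji]
        · intro u hu
          simp only [Finset.mem_filter, Finset.mem_univ, true_and] at hu
          dsimp only
          rw [← Finset.mul_prod_erase S _ hiS]
          have hupd : ∀ j, j ≠ i → Function.update u i (t i) j = u j :=
            fun j hj => Function.update_of_ne hj _ _
          congr 1
          · exact (hloc i u (Function.update u i (t i))
              (fun k hk => (hupd k (fun h => hnp i hiS (h ▸ hk))).symm) (u i))
          · apply Finset.prod_congr rfl
            intro j hj
            obtain ⟨hji, hjS⟩ := Finset.mem_erase.1 hj
            rw [hupd j hji]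
            exact hloc j u (Function.update u i (t i))
              (fun k hk => (hupd k (fun h => hnp j hjS (h ▸ hk))).symm) (u j)
      rw [key, Finset.sum_product]
      have : ∀ u ∈ Finset.univ.filter (fun u : ∀ i, D i => ∀ j ∉ S.erase i, u j = t j),
          ∑ x : D i, K i u x * ∏ j ∈ S.erase i, K j u (u j)
          = ∏ j ∈ S.erase i, K j u (u j) := by
        intro u _
        rw [← Finset.sum_mul, hnorm i u, one_mul]
      rw [Finset.sum_congr rfl this]
      exact ih (S.erase i) (Finset.erase_ssubset hiS) t

/-- **Theorem 1, graph reduction, equality queries.**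
For a discrete Bayesian network, a set `Q_V` of query attributes with target values `v`,
any parent-closed set `A ⊇ Q_V`, and any default full assignment `t₀`, the probability
of the equality query computed on the full network equals the probability computed on
the reduced network on `A`. -/
theorem bayes_net_graph_reduction_eq_query
    {ι : Type*} [Fintype ι] [DecidableEq ι]
    (D : ι → Type*) [∀ i, Fintype (D i)] [∀ i, Nonempty (D i)] [∀ i, DecidableEq (D i)]
    (par : ι → Finset ι) (ρ : ι → ℕ)
    (hacyc : ∀ i, ∀ j ∈ par i, ρ j < ρ i)
    (K : ∀ i, (∀ j, D j) → D i → ℝ≥0)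
    (hloc : ∀ i, ∀ t t' : ∀ j, D j, (∀ j ∈ par i, t j = t' j) → ∀ v, K i t v = K i t' v)
    (hnorm : ∀ i, ∀ t : ∀ j, D j, ∑ v, K i t v = 1)
    (QV : Finset ι) (v : ∀ i, D i)
    (A : Finset ι) (hA : ∀ i ∈ A, ∀ j ∈ par i, j ∈ A) (hQA : QV ⊆ A)
    (t₀ : ∀ i, D i) :
    ∑ u ∈ Finset.univ.filter (fun u : ∀ i, D i => ∀ i ∈ QV, u i = v i),
        ∏ i, K i u (u i)
      = ∑ u ∈ Finset.univ.filter
            (fun u : ∀ i, D i => (∀ i ∈ QV, u i = v i) ∧ ∀ i ∉ A, u i = t₀ i),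
          ∏ i ∈ A, K i u (u i) := by
  classical
  set φ : (∀ i, D i) → (∀ i, D i) := fun u j => if j ∈ A then u j else t₀ j with hφ
  set s := Finset.univ.filter (fun u : ∀ i, D i => ∀ i ∈ QV, u i = v i) with hs
  set T := Finset.univ.filter
      (fun u : ∀ i, D i => (∀ i ∈ QV, u i = v i) ∧ ∀ i ∉ A, u i = t₀ i) with hT
  have hmaps : ∀ u ∈ s, φ u ∈ T := by
    intro u hu
    simp only [hs, Finset.mem_filter, Finset.mem_univ, true_and] at hu
    simp only [hT, Finset.mem_filter, Finset.mem_univ, true_and]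
    constructor
    · intro i hi
      simp only [hφ, if_pos (hQA hi)]
      exact hu i hi
    · intro i hi
      simp only [hφ, if_neg hi]
  rw [← Finset.sum_fiberwise_of_maps_to hmaps (fun u => ∏ i, K i u (u i))]
  apply Finset.sum_congr rfl
  intro w hw
  simp only [hT, Finset.mem_filter, Finset.mem_univ, true_and] at hw
  obtain ⟨hwQ, hwA⟩ := hw
  have hfib : s.filter (fun u => φ u = w)
      = Finset.univ.filter (fun u : ∀ i, D i => ∀ j ∉ Aᶜ, u j = w j) := by
    ext u
    simp only [hs, Finset.mem_filter, Finset.mem_univ, true_and, Finset.mem_compl, not_not]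
    constructor
    · rintro ⟨_, hphi⟩ j hj
      have := congrFun hphi j
      simpa [hφ, if_pos hj] using this
    · intro h
      refine ⟨fun i hi => (h i (hQA hi)).trans (hwQ i hi), ?_⟩
      funext j
      by_cases hj : j ∈ A
      · simp only [hφ, if_pos hj]; exact h j hj
      · simp only [hφ, if_neg hj]; exact (hwA j hj).symm
  rw [hfib]
  have hsplit : ∀ u ∈ Finset.univ.filter (fun u : ∀ i, D i => ∀ j ∉ Aᶜ, u j = w j),
      ∏ i, K i u (u i) = (∏ i ∈ A, K i w (w i)) * ∏ i ∈ Aᶜ, K i u (u i) := by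
    intro u hu
    simp only [Finset.mem_filter, Finset.mem_univ, true_and, Finset.mem_compl, not_not] at hu
    rw [← Finset.prod_mul_prod_compl A (fun i => K i u (u i))]
    congr 1
    apply Finset.prod_congr rfl
    intro i hi
    rw [hu i hi]
    exact hloc i u w (fun k hk => hu k (hA i hi k hk)) (w i)
  rw [Finset.sum_congr rfl hsplit, ← Finset.mul_sum,
    bn_ext_sum D par ρ hacyc K hloc hnorm Aᶜ w, mul_one]
end

section
/- (Theorem 1, graph reduction, range queries.) Let (ι, D, par, ρ, K) be a discrete Bayesian network, let R i ⊆ D i be query regions for each i : ι, let A ⊆ ι be a parent-closed set such that R i = D i (the full domain) for every i ∉ A, and fix a default full assignment t₀ with t₀ i ∈ R i for all i. Then ∑ over full assignments u with u i ∈ R i for all i of ∏_{i : ι} K i u (u i) equals ∑ over full assignments u with u i ∈ R i for all i ∈ A and u i = t₀ i for all i ∉ A of ∏_{i ∈ A} K i u (u i). -/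
open scoped NNReal
open Finset

/-- Auxiliary: summing the product of normalized kernels over a block `B` of free
coordinates (all other coordinates pinned to `u₀`) gives `1`. -/
theorem bayes_net_aux_sum_one
    {ι : Type*} [Fintype ι] [DecidableEq ι]
    (D : ι → Type*) [∀ i, Fintype (D i)] [∀ i, DecidableEq (D i)]
    (par : ι → Finset ι) (ρ : ι → ℕ)
    (hacyc : ∀ i, ∀ j ∈ par i, ρ j < ρ i)
    (K : ∀ i, (∀ j, D j) → D i → ℝ≥0)
    (hloc : ∀ i, ∀ t t' : ∀ j, D j, (∀ j ∈ par i, t j = t' j) → ∀ v, K i t v = K i t' v)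
    (hnorm : ∀ i, ∀ t : ∀ j, D j, ∑ v, K i t v = 1) :
    ∀ B : Finset ι, ∀ u₀ : ∀ i, D i,
      ∑ u ∈ Finset.univ.filter (fun u : ∀ i, D i => ∀ i ∉ B, u i = u₀ i),
        ∏ i ∈ B, K i u (u i) = 1 := by
  intro B
  induction B using Finset.strongInduction with
  | _ B ih =>
    intro u₀
    rcases B.eq_empty_or_nonempty with rfl | hB
    · have hset : Finset.univ.filter
          (fun u : ∀ i, D i => ∀ i ∉ (∅ : Finset ι), u i = u₀ i) = {u₀} := by
        ext u
        simp [funext_iff]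
      rw [hset]
      simp
    · obtain ⟨i, hiB, hmax⟩ := B.exists_max_image ρ hB
      have hii : i ∉ par i := fun h => lt_irrefl _ (hacyc i i h)
      have hnotpar : ∀ j ∈ B.erase i, i ∉ par j := by
        intro j hj hij
        exact absurd (hmax j (Finset.mem_of_mem_erase hj)) (not_le.2 (hacyc j i hij))
      set B' := B.erase i with hB'
      have key : ∑ u ∈ Finset.univ.filter (fun u : ∀ i, D i => ∀ j ∉ B, u j = u₀ j),
          ∏ j ∈ B, K j u (u j)
          = ∑ p ∈ (Finset.univ.filter
              (fun u : ∀ i, D i => ∀ j ∉ B', u j = u₀ j)) ×ˢ (Finset.univ : Finset (D i)),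
            K i p.1 p.2 * ∏ j ∈ B', K j p.1 (p.1 j) := by
        refine Finset.sum_nbij' (fun u => (Function.update u i (u₀ i), u i))
          (fun p => Function.update p.1 i p.2) ?_ ?_ ?_ ?_ ?_
        · intro u hu
          simp only [Finset.mem_filter, Finset.mem_univ, true_and] at hu ⊢
          rw [Finset.mem_product]
          refine ⟨?_, Finset.mem_univ _⟩
          simp only [Finset.mem_filter, Finset.mem_univ, true_and]
          intro j hj
          by_cases hji : j = i
          · subst hji; simp
          · rw [Function.update_of_ne hji]
            exact hu j (fun hjB => hj (Finset.mem_erase.2 ⟨hji, hjB⟩))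
        · intro p hp
          rw [Finset.mem_product] at hp
          obtain ⟨hp1, -⟩ := hp
          simp only [Finset.mem_filter, Finset.mem_univ, true_and] at hp1 ⊢
          intro j hj
          have hji : j ≠ i := fun h => hj (h ▸ hiB)
          rw [Function.update_of_ne hji]
          exact hp1 j (fun h => hj (Finset.mem_of_mem_erase h))
        · intro u hu
          simp [Function.update_idem]
        · intro p hp
          rw [Finset.mem_product] at hp
          obtain ⟨hp1, -⟩ := hp
          simp only [Finset.mem_filter, Finset.mem_univ, true_and] at hp1
          have h0 : p.1 i = u₀ i := hp1 i (Finset.notMem_erase i B)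
          simp only [Function.update_idem, Function.update_self]
          exact Prod.ext (by rw [← h0, Function.update_eq_self]) rfl
        · intro u hu
          have hsplit : ∏ j ∈ B, K j u (u j)
              = K i u (u i) * ∏ j ∈ B', K j u (u j) :=
            (Finset.mul_prod_erase B _ hiB).symm
          rw [hsplit]
          congr 1
          · refine hloc i u (Function.update u i (u₀ i)) ?_ (u i)
            intro j hj
            have : j ≠ i := fun h => hii (h ▸ hj)
            rw [Function.update_of_ne this]
          · refine Finset.prod_congr rfl ?_
            intro j hj
            have hji : j ≠ i := (Finset.mem_erase.1 hj).1
            have h1 : K j u (u j) = K j (Function.update u i (u₀ i)) (u j) := by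
              refine hloc j u _ ?_ (u j)
              intro k hk
              have : k ≠ i := fun h => hnotpar j hj (h ▸ hk)
              rw [Function.update_of_ne this]
            simp only [Function.update_of_ne hji]
            exact h1
      rw [key, Finset.sum_product]
      have : ∀ u' ∈ Finset.univ.filter
          (fun u : ∀ i, D i => ∀ j ∉ B', u j = u₀ j),
          ∑ v : D i, K i u' v * ∏ j ∈ B', K j u' (u' j)
            = ∏ j ∈ B', K j u' (u' j) := by
        intro u' _
        rw [← Finset.sum_mul, hnorm, one_mul]
      rw [Finset.sum_congr rfl this]
      exact ih B' (Finset.erase_ssubset hiB) u₀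

/-- **Theorem 1, graph reduction, range queries.**
For a discrete Bayesian network with query regions `R i ⊆ D i`, a parent-closed set `A`
such that `R i` is the full domain for every `i ∉ A`, and a default assignment `t₀` lying
in all regions, the range-query probability on the full network equals the one computed
on the reduced network on `A`. -/
theorem bayes_net_graph_reduction_range_query
    {ι : Type*} [Fintype ι] [DecidableEq ι]
    (D : ι → Type*) [∀ i, Fintype (D i)] [∀ i, Nonempty (D i)] [∀ i, DecidableEq (D i)]
    (par : ι → Finset ι) (ρ : ι → ℕ)
    (hacyc : ∀ i, ∀ j ∈ par i, ρ j < ρ i)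
    (K : ∀ i, (∀ j, D j) → D i → ℝ≥0)
    (hloc : ∀ i, ∀ t t' : ∀ j, D j, (∀ j ∈ par i, t j = t' j) → ∀ v, K i t v = K i t' v)
    (hnorm : ∀ i, ∀ t : ∀ j, D j, ∑ v, K i t v = 1)
    (R : ∀ i, Finset (D i))
    (A : Finset ι) (hA : ∀ i ∈ A, ∀ j ∈ par i, j ∈ A)
    (hRfull : ∀ i ∉ A, R i = Finset.univ)
    (t₀ : ∀ i, D i) (ht₀ : ∀ i, t₀ i ∈ R i) :
    ∑ u ∈ Finset.univ.filter (fun u : ∀ i, D i => ∀ i, u i ∈ R i),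
        ∏ i, K i u (u i)
      = ∑ u ∈ Finset.univ.filter
            (fun u : ∀ i, D i => (∀ i ∈ A, u i ∈ R i) ∧ ∀ i ∉ A, u i = t₀ i),
          ∏ i ∈ A, K i u (u i) := by
  classical
  set S := Finset.univ.filter (fun u : ∀ i, D i => ∀ i, u i ∈ R i) with hS
  set T := Finset.univ.filter
      (fun u : ∀ i, D i => (∀ i ∈ A, u i ∈ R i) ∧ ∀ i ∉ A, u i = t₀ i) with hT
  set g : (∀ i, D i) → (∀ i, D i) := fun u j => if j ∈ A then u j else t₀ j with hg
  have hmaps : ∀ u ∈ S, g u ∈ T := by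
    intro u hu
    simp only [hS, Finset.mem_filter, Finset.mem_univ, true_and] at hu
    simp only [hT, Finset.mem_filter, Finset.mem_univ, true_and]
    constructor
    · intro i hi; simp only [hg, if_pos hi]; exact hu i
    · intro i hi; simp only [hg, if_neg hi]
  rw [← Finset.sum_fiberwise_of_maps_to hmaps]
  refine Finset.sum_congr rfl ?_
  intro w hw
  simp only [hT, Finset.mem_filter, Finset.mem_univ, true_and] at hw
  obtain ⟨hw1, hw2⟩ := hw
  have hfib : S.filter (fun u => g u = w)
      = Finset.univ.filter (fun u : ∀ i, D i => ∀ j ∉ (Aᶜ : Finset ι), u j = w j) := by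
    ext u
    simp only [hS, Finset.mem_filter, Finset.mem_univ, true_and, Finset.mem_compl, not_not]
    constructor
    · rintro ⟨-, hgu⟩ j hj
      rw [← hgu]; simp [hg, hj]
    · intro h
      constructor
      · intro i
        by_cases hi : i ∈ A
        · rw [h i hi]; exact hw1 i hi
        · rw [hRfull i hi]; exact Finset.mem_univ _
      · funext j
        by_cases hj : j ∈ A
        · simp [hg, hj, h j hj]
        · simp [hg, hj, (hw2 j hj).symm]
  rw [hfib]
  have hsplit : ∀ u : ∀ i, D i, ∏ i, K i u (u i)
      = (∏ i ∈ A, K i u (u i)) * ∏ i ∈ Aᶜ, K i u (u i) :=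
    fun u => (Finset.prod_mul_prod_compl A _).symm
  have hfix : ∀ u ∈ Finset.univ.filter
      (fun u : ∀ i, D i => ∀ j ∉ (Aᶜ : Finset ι), u j = w j),
      ∏ i ∈ A, K i u (u i) = ∏ i ∈ A, K i w (w i) := by
    intro u hu
    simp only [Finset.mem_filter, Finset.mem_univ, true_and, Finset.mem_compl, not_not] at hu
    refine Finset.prod_congr rfl ?_
    intro i hi
    have h1 : u i = w i := hu i hi
    have h2 : K i u (u i) = K i w (u i) := by
      refine hloc i u w ?_ (u i)
      intro j hj
      exact hu j (hA i hi j hj)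
    rw [h2, h1]
  calc ∑ u ∈ Finset.univ.filter
        (fun u : ∀ i, D i => ∀ j ∉ (Aᶜ : Finset ι), u j = w j), ∏ i, K i u (u i)
      = ∑ u ∈ Finset.univ.filter
        (fun u : ∀ i, D i => ∀ j ∉ (Aᶜ : Finset ι), u j = w j),
          (∏ i ∈ A, K i w (w i)) * ∏ i ∈ Aᶜ, K i u (u i) := by
        refine Finset.sum_congr rfl ?_
        intro u hu
        rw [hsplit u, hfix u hu]
    _ = (∏ i ∈ A, K i w (w i)) * ∑ u ∈ Finset.univ.filter
        (fun u : ∀ i, D i => ∀ j ∉ (Aᶜ : Finset ι), u j = w j),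
          ∏ i ∈ Aᶜ, K i u (u i) := by rw [Finset.mul_sum]
    _ = ∏ i ∈ A, K i w (w i) := by
        rw [bayes_net_aux_sum_one D par ρ hacyc K hloc hnorm (Aᶜ) w, mul_one]
end

section
/- (Sink elimination.) Let (ι, D, par, ρ, K) be a discrete Bayesian network, let i₀ : ι be a sink (i.e., i₀ ∉ par i for every i : ι), let R i ⊆ D i be query regions with R i₀ = D i₀, and fix a default full assignment t₀ with t₀ i ∈ R i for all i. Then removing the unconstrained sink does not change the query probability: ∑ over full assignments u with u i ∈ R i for all i of ∏_{i : ι} K i u (u i) equals ∑ over full assignments u with u i ∈ R i for all i ≠ i₀ and u i₀ = t₀ i₀ of ∏_{i ≠ i₀} K i u (u i). -/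
open scoped NNReal
open Finset

/-- **Sink elimination.**
For a discrete Bayesian network, if `i₀` is a sink (a parent of no attribute) and the
query region on `i₀` is the full domain, then removing the unconstrained sink does not
change the query probability. -/
theorem bayes_net_sink_elimination
    {ι : Type*} [Fintype ι] [DecidableEq ι]
    (D : ι → Type*) [∀ i, Fintype (D i)] [∀ i, Nonempty (D i)] [∀ i, DecidableEq (D i)]
    (par : ι → Finset ι) (ρ : ι → ℕ)
    (hacyc : ∀ i, ∀ j ∈ par i, ρ j < ρ i)
    (K : ∀ i, (∀ j, D j) → D i → ℝ≥0)
    (hloc : ∀ i, ∀ t t' : ∀ j, D j, (∀ j ∈ par i, t j = t' j) → ∀ v, K i t v = K i t' v)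
    (hnorm : ∀ i, ∀ t : ∀ j, D j, ∑ v, K i t v = 1)
    (i₀ : ι) (hsink : ∀ i, i₀ ∉ par i)
    (R : ∀ i, Finset (D i)) (hR : R i₀ = Finset.univ)
    (t₀ : ∀ i, D i) (ht₀ : ∀ i, t₀ i ∈ R i) :
    ∑ u ∈ Finset.univ.filter (fun u : ∀ i, D i => ∀ i, u i ∈ R i),
        ∏ i, K i u (u i)
      = ∑ u ∈ Finset.univ.filter
            (fun u : ∀ i, D i => (∀ i, i ≠ i₀ → u i ∈ R i) ∧ u i₀ = t₀ i₀),
          ∏ i ∈ Finset.univ.erase i₀, K i u (u i) := by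
  classical
  set φ : (∀ i, D i) → (∀ i, D i) := fun u => Function.update u i₀ (t₀ i₀) with hφ
  have hmap : ∀ u ∈ Finset.univ.filter (fun u : ∀ i, D i => ∀ i, u i ∈ R i),
      φ u ∈ Finset.univ.filter
        (fun u : ∀ i, D i => (∀ i, i ≠ i₀ → u i ∈ R i) ∧ u i₀ = t₀ i₀) := by
    intro u hu
    simp only [Finset.mem_filter, Finset.mem_univ, true_and] at hu ⊢
    refine ⟨fun i hi => ?_, ?_⟩
    · simpa [hφ, Function.update_of_ne hi] using hu i
    · simp [hφ]
  rw [← Finset.sum_fiberwise_of_maps_to hmap]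
  refine Finset.sum_congr rfl fun w hw => ?_
  simp only [Finset.mem_filter, Finset.mem_univ, true_and] at hw
  have key : ∀ u, (∀ i, u i ∈ R i) → φ u = w →
      ∏ i, K i u (u i)
        = K i₀ w (u i₀) * ∏ i ∈ Finset.univ.erase i₀, K i w (w i) := by
    intro u hu hfw
    have huw : ∀ i, i ≠ i₀ → u i = w i := by
      intro i hi
      rw [← hfw, hφ]
      simp [Function.update_of_ne hi]
    rw [← Finset.mul_prod_erase Finset.univ _ (Finset.mem_univ i₀)]
    congr 1
    · exact hloc i₀ u w (fun j hj => huw j (fun h => hsink _ (h ▸ hj))) _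
    · refine Finset.prod_congr rfl fun i hi => ?_
      have hi' : i ≠ i₀ := (Finset.mem_erase.mp hi).1
      rw [huw i hi']
      exact hloc i u w (fun j hj => huw j (fun h => hsink _ (h ▸ hj))) _
  calc ∑ u ∈ (Finset.univ.filter (fun u : ∀ i, D i => ∀ i, u i ∈ R i)).filter
          (fun u => φ u = w), ∏ i, K i u (u i)
      = ∑ u ∈ (Finset.univ.filter (fun u : ∀ i, D i => ∀ i, u i ∈ R i)).filter
          (fun u => φ u = w),
          K i₀ w (u i₀) * ∏ i ∈ Finset.univ.erase i₀, K i w (w i) := by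
        refine Finset.sum_congr rfl fun u hu => ?_
        simp only [Finset.mem_filter, Finset.mem_univ, true_and] at hu
        exact key u hu.1 hu.2
    _ = (∑ u ∈ (Finset.univ.filter (fun u : ∀ i, D i => ∀ i, u i ∈ R i)).filter
          (fun u => φ u = w), K i₀ w (u i₀))
          * ∏ i ∈ Finset.univ.erase i₀, K i w (w i) := by
        rw [← Finset.sum_mul]
    _ = (∑ v : D i₀, K i₀ w v) * ∏ i ∈ Finset.univ.erase i₀, K i w (w i) := by
        congr 1
        refine Finset.sum_bij' (fun u _ => u i₀)
          (fun v _ => Function.update w i₀ v) ?_ ?_ ?_ ?_ ?_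
        · intro u hu; exact Finset.mem_univ _
        · intro v _
          simp only [Finset.mem_filter, Finset.mem_univ, true_and]
          constructor
          · intro i
            by_cases hi : i = i₀
            · subst hi; rw [Function.update_self, hR]; exact Finset.mem_univ _
            · rw [Function.update_of_ne hi]; exact hw.1 i hi
          · rw [hφ]
            simp only [Function.update_idem]
            rw [← hw.2, Function.update_eq_self]
        · intro u hu
          simp only [Finset.mem_filter, Finset.mem_univ, true_and] at hu
          show Function.update w i₀ (u i₀) = u
          funext i
          by_cases hi : i = i₀
          · subst hi; rw [Function.update_self]
          · rw [Function.update_of_ne hi]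
            rw [← hu.2, hφ]
            simp [Function.update_of_ne hi]
        · intro v _
          show Function.update w i₀ v i₀ = v
          exact Function.update_self _ _ _
        · intro u hu; rfl
    _ = ∏ i ∈ Finset.univ.erase i₀, K i w (w i) := by rw [hnorm]; ring
end

section
/- (Consistency of conditional probability tables.) Let (ι, D, par, ρ, K) be a discrete Bayesian network, let N ⊆ ι be parent-closed, let i₀ ∉ N be an attribute with par i₀ ⊆ N, let s : ∀ i, D i be a full assignment, and let v : D i₀. Then ∑ over full assignments u with u j = s j for all j ∈ N and u i₀ = v of ∏_{i : ι} K i u (u i) equals K i₀ s v multiplied by ∑ over full assignments u with u j = s j for all j ∈ N of ∏_{i : ι} K i u (u i). In particular, whenever the marginal probability of the event {T_j = s j for all j ∈ N} is positive, the conditional probability of T_{i₀} = v given that event equals the table entry K i₀ s v. -/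
open scoped NNReal
open Finset

/-- Marginalizing out the variables in `B` (summing over all assignments that agree with `s`
off `B`) of the product of the tables of the variables in `B` gives `1`. -/
theorem bayes_net_marg
    {ι : Type*} [Fintype ι] [DecidableEq ι]
    (D : ι → Type*) [∀ i, Fintype (D i)] [∀ i, Nonempty (D i)] [∀ i, DecidableEq (D i)]
    (par : ι → Finset ι) (ρ : ι → ℕ)
    (hacyc : ∀ i, ∀ j ∈ par i, ρ j < ρ i)
    (K : ∀ i, (∀ j, D j) → D i → ℝ≥0)
    (hloc : ∀ i, ∀ t t' : ∀ j, D j, (∀ j ∈ par i, t j = t' j) → ∀ v, K i t v = K i t' v)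
    (hnorm : ∀ i, ∀ t : ∀ j, D j, ∑ v, K i t v = 1)
    (B : Finset ι) :
    ∀ s : ∀ i, D i,
      (∑ u ∈ Finset.univ.filter (fun u : ∀ i, D i => ∀ j, j ∉ B → u j = s j),
        ∏ j ∈ B, K j u (u j)) = 1 := by
  induction B using Finset.strongInduction with
  | _ B ih =>
    intro s
    rcases B.eq_empty_or_nonempty with rfl | hne
    · have hset : Finset.univ.filter (fun u : ∀ i, D i => ∀ j, j ∉ (∅ : Finset ι) → u j = s j)
          = {s} := by
        ext u
        simp [funext_iff]
      rw [hset]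
      simp
    · obtain ⟨i, hiB, hmax⟩ := B.exists_max_image ρ hne
      set B' := B.erase i with hB'
      have hssub : B' ⊂ B := Finset.erase_ssubset hiB
      have hinotpar : ∀ j ∈ B', i ∉ par j := by
        intro j hj hij
        exact absurd (hmax j (Finset.mem_of_mem_erase hj)) (not_le_of_gt (hacyc j i hij))
      have hii : i ∉ par i := fun h => lt_irrefl _ (hacyc i i h)
      set S := Finset.univ.filter (fun u : ∀ i, D i => ∀ j, j ∉ B → u j = s j) with hS
      set S' := Finset.univ.filter (fun u : ∀ i, D i => ∀ j, j ∉ B' → u j = s j) with hS'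
      have key : (∑ u ∈ S, ∏ j ∈ B, K j u (u j))
          = ∑ p ∈ (Finset.univ : Finset (D i)) ×ˢ S',
              K i p.2 p.1 * ∏ j ∈ B', K j p.2 (p.2 j) := by
        refine Finset.sum_bij' (fun u _ => (u i, Function.update u i (s i)))
          (fun p _ => Function.update p.2 i p.1) ?_ ?_ ?_ ?_ ?_
        · intro u hu
          simp only [hS, Finset.mem_filter, Finset.mem_univ, true_and] at hu
          simp only [Finset.mem_product, Finset.mem_univ, true_and, hS', Finset.mem_filter]
          intro j hj
          rcases eq_or_ne j i with rfl | hji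
          · simp [Function.update]
          · rw [Function.update_of_ne hji]
            exact hu j (fun hjB => hj (Finset.mem_erase.2 ⟨hji, hjB⟩))
        · intro p hp
          simp only [Finset.mem_product, Finset.mem_univ, true_and, hS',
            Finset.mem_filter] at hp
          simp only [hS, Finset.mem_filter, Finset.mem_univ, true_and]
          intro j hj
          have hji : j ≠ i := fun h => hj (h ▸ hiB)
          rw [Function.update_of_ne hji]
          exact hp j (fun h => hj (Finset.mem_of_mem_erase h))
        · intro u hu
          funext j
          rcases eq_or_ne j i with rfl | hji
          · simp
          · simp [Function.update_of_ne hji]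
        · intro p hp
          simp only [Finset.mem_product, Finset.mem_univ, true_and, hS',
            Finset.mem_filter] at hp
          have hpi : p.2 i = s i := hp i (Finset.notMem_erase i B)
          ext
          · simp
          · simp only [Function.update_idem]
            rw [← hpi, Function.update_eq_self]
        · intro u hu
          have hupd : ∀ j ∈ B', K j u (u j) = K j (Function.update u i (s i))
              ((Function.update u i (s i)) j) := by
            intro j hj
            have hji : j ≠ i := (Finset.mem_erase.1 hj).1
            rw [Function.update_of_ne hji]
            exact hloc j u _ (fun k hk => (Function.update_of_ne
              (fun h => hinotpar j hj (by rwa [h] at hk)) _ _).symm) (u j)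
          have hKi : K i u (u i) = K i (Function.update u i (s i)) (u i) :=
            hloc i u _ (fun k hk => (Function.update_of_ne
              (fun h => hii (by rwa [h] at hk)) _ _).symm) (u i)
          rw [← Finset.mul_prod_erase B _ hiB, hKi, Finset.prod_congr rfl hupd]
      rw [key, Finset.sum_product, Finset.sum_comm]
      have : ∀ u ∈ S', (∑ w : D i, K i u w * ∏ j ∈ B', K j u (u j))
          = ∏ j ∈ B', K j u (u j) := by
        intro u _
        rw [← Finset.sum_mul, hnorm i u, one_mul]
      rw [Finset.sum_congr rfl this]
      exact ih B' hssub s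

/-- For a parent-closed `A`, the probability of agreeing with `s` on `A` is the product of
the table entries of the variables in `A`. -/
theorem bayes_net_closed_sum
    {ι : Type*} [Fintype ι] [DecidableEq ι]
    (D : ι → Type*) [∀ i, Fintype (D i)] [∀ i, Nonempty (D i)] [∀ i, DecidableEq (D i)]
    (par : ι → Finset ι) (ρ : ι → ℕ)
    (hacyc : ∀ i, ∀ j ∈ par i, ρ j < ρ i)
    (K : ∀ i, (∀ j, D j) → D i → ℝ≥0)
    (hloc : ∀ i, ∀ t t' : ∀ j, D j, (∀ j ∈ par i, t j = t' j) → ∀ v, K i t v = K i t' v)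
    (hnorm : ∀ i, ∀ t : ∀ j, D j, ∑ v, K i t v = 1)
    (A : Finset ι) (hA : ∀ i ∈ A, ∀ j ∈ par i, j ∈ A) (s : ∀ i, D i) :
    (∑ u ∈ Finset.univ.filter (fun u : ∀ i, D i => ∀ j ∈ A, u j = s j),
        ∏ i, K i u (u i)) = ∏ i ∈ A, K i s (s i) := by
  have hfilter : Finset.univ.filter (fun u : ∀ i, D i => ∀ j ∈ A, u j = s j)
      = Finset.univ.filter (fun u : ∀ i, D i => ∀ j, j ∉ Aᶜ → u j = s j) := by
    ext u; simp
  have hterm : ∀ u ∈ Finset.univ.filter (fun u : ∀ i, D i => ∀ j, j ∉ Aᶜ → u j = s j),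
      (∏ i, K i u (u i)) = (∏ i ∈ A, K i s (s i)) * ∏ j ∈ Aᶜ, K j u (u j) := by
    intro u hu
    simp only [Finset.mem_filter, Finset.mem_univ, true_and] at hu
    have hu' : ∀ j ∈ A, u j = s j := fun j hj => hu j (by simpa using hj)
    have hA' : ∀ i ∈ A, K i u (u i) = K i s (s i) := by
      intro i hi
      rw [hu' i hi]
      exact hloc i u s (fun k hk => hu' k (hA i hi k hk)) (s i)
    rw [← Finset.prod_mul_prod_compl A, Finset.prod_congr rfl hA']
  rw [hfilter, Finset.sum_congr rfl hterm, ← Finset.mul_sum,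
    bayes_net_marg D par ρ hacyc K hloc hnorm Aᶜ s, mul_one]

/-- **Consistency of conditional probability tables.**
For a discrete Bayesian network, a parent-closed set `N`, an attribute `i₀ ∉ N` with
`par i₀ ⊆ N`, a full assignment `s` and a value `v : D i₀`:
`P(T_N = s_N ∧ T_{i₀} = v) = K i₀ s v * P(T_N = s_N)`; in particular, whenever
`P(T_N = s_N) > 0`, the conditional probability of `T_{i₀} = v` given `T_N = s_N`
equals the table entry `K i₀ s v`. -/
theorem bayes_net_cpt_consistency
    {ι : Type*} [Fintype ι] [DecidableEq ι]
    (D : ι → Type*) [∀ i, Fintype (D i)] [∀ i, Nonempty (D i)] [∀ i, DecidableEq (D i)]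
    (par : ι → Finset ι) (ρ : ι → ℕ)
    (hacyc : ∀ i, ∀ j ∈ par i, ρ j < ρ i)
    (K : ∀ i, (∀ j, D j) → D i → ℝ≥0)
    (hloc : ∀ i, ∀ t t' : ∀ j, D j, (∀ j ∈ par i, t j = t' j) → ∀ v, K i t v = K i t' v)
    (hnorm : ∀ i, ∀ t : ∀ j, D j, ∑ v, K i t v = 1)
    (N : Finset ι) (hN : ∀ i ∈ N, ∀ j ∈ par i, j ∈ N)
    (i₀ : ι) (hi₀ : i₀ ∉ N) (hpar : par i₀ ⊆ N)
    (s : ∀ i, D i) (v : D i₀) :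
    (∑ u ∈ Finset.univ.filter
          (fun u : ∀ i, D i => (∀ j ∈ N, u j = s j) ∧ u i₀ = v),
        ∏ i, K i u (u i))
      = K i₀ s v *
        ∑ u ∈ Finset.univ.filter (fun u : ∀ i, D i => ∀ j ∈ N, u j = s j),
          ∏ i, K i u (u i)
    ∧ ((0 < ∑ u ∈ Finset.univ.filter (fun u : ∀ i, D i => ∀ j ∈ N, u j = s j),
            ∏ i, K i u (u i)) →
        (∑ u ∈ Finset.univ.filter
              (fun u : ∀ i, D i => (∀ j ∈ N, u j = s j) ∧ u i₀ = v),
            ∏ i, K i u (u i)) /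
          (∑ u ∈ Finset.univ.filter (fun u : ∀ i, D i => ∀ j ∈ N, u j = s j),
            ∏ i, K i u (u i))
          = K i₀ s v) := by
  set s' : ∀ i, D i := Function.update s i₀ v with hs'
  have hs'N : ∀ j ∈ N, s' j = s j := by
    intro j hj
    exact Function.update_of_ne (fun h => hi₀ (by rwa [h] at hj)) _ _
  have hRHS : (∑ u ∈ Finset.univ.filter (fun u : ∀ i, D i => ∀ j ∈ N, u j = s j),
      ∏ i, K i u (u i)) = ∏ i ∈ N, K i s (s i) :=
    bayes_net_closed_sum D par ρ hacyc K hloc hnorm N hN s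
  have hM : ∀ i ∈ insert i₀ N, ∀ j ∈ par i, j ∈ insert i₀ N := by
    intro i hi j hj
    rcases Finset.mem_insert.1 hi with rfl | hi
    · exact Finset.mem_insert_of_mem (hpar hj)
    · exact Finset.mem_insert_of_mem (hN i hi j hj)
  have hfilt : Finset.univ.filter
        (fun u : ∀ i, D i => (∀ j ∈ N, u j = s j) ∧ u i₀ = v)
      = Finset.univ.filter (fun u : ∀ i, D i => ∀ j ∈ insert i₀ N, u j = s' j) := by
    ext u
    simp only [Finset.mem_filter, Finset.mem_univ, true_and, Finset.mem_insert]
    constructor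
    · rintro ⟨h1, h2⟩ j hj
      rcases hj with rfl | hj
      · simp [hs', h2]
      · rw [hs'N j hj]; exact h1 j hj
    · intro h
      refine ⟨fun j hj => ?_, ?_⟩
      · rw [← hs'N j hj]; exact h j (Or.inr hj)
      · have := h i₀ (Or.inl rfl)
        simpa [hs'] using this
  have hLHS : (∑ u ∈ Finset.univ.filter
        (fun u : ∀ i, D i => (∀ j ∈ N, u j = s j) ∧ u i₀ = v),
      ∏ i, K i u (u i)) = K i₀ s v * ∏ i ∈ N, K i s (s i) := by
    rw [hfilt, bayes_net_closed_sum D par ρ hacyc K hloc hnorm (insert i₀ N) hM s',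
      Finset.prod_insert hi₀]
    have h1 : K i₀ s' (s' i₀) = K i₀ s v := by
      have : s' i₀ = v := Function.update_self _ _ _
      rw [this]
      exact hloc i₀ s' s (fun k hk => hs'N k (hpar hk)) v
    have h2 : ∀ i ∈ N, K i s' (s' i) = K i s (s i) := by
      intro i hi
      rw [hs'N i hi]
      exact hloc i s' s (fun k hk => hs'N k (hN i hi k hk)) (s i)
    rw [h1, Finset.prod_congr rfl h2]
  have hmain : (∑ u ∈ Finset.univ.filter
        (fun u : ∀ i, D i => (∀ j ∈ N, u j = s j) ∧ u i₀ = v),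
      ∏ i, K i u (u i))
      = K i₀ s v *
        ∑ u ∈ Finset.univ.filter (fun u : ∀ i, D i => ∀ j ∈ N, u j = s j),
          ∏ i, K i u (u i) := by
    rw [hLHS, hRHS]
  refine ⟨hmain, fun hpos => ?_⟩
  rw [hmain, mul_div_assoc, div_self (ne_of_gt hpos), mul_one]
end

section
/- (Exactness of the progressive-sampling conditional.) Let (ι, D, par, ρ, K) be a discrete Bayesian network, let N ⊆ ι be parent-closed, let i₀ ∉ N be an attribute with par i₀ ⊆ N, let B : (∀ i, D i) → Prop be an event depending only on the coordinates in N (i.e., B u ↔ B u' whenever u and u' agree on N), let R ⊆ D i₀, and fix a default full assignment t₀. Then ∑ over full assignments u with B u and u i₀ ∈ R of ∏_{i : ι} K i u (u i) equals ∑ over full assignments u with B u and u j = t₀ j for all j ∉ N of the product ( ∑ over full assignments w agreeing with u on N of ∏_{i : ι} K i w (w i) ) · ( ∑_{v ∈ R} K i₀ u v ). In words: the probability that T_{i₀} ∈ R jointly with an event on a parent-closed set of non-descendants equals the sum, over configurations of that set, of the configuration's probability times the conditional table mass of R at that configuration. -/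
open scoped NNReal
open Finset

lemma bn_marginal_aux
    {ι : Type*} [Fintype ι] [DecidableEq ι]
    (D : ι → Type*) [∀ i, Fintype (D i)] [∀ i, Nonempty (D i)] [∀ i, DecidableEq (D i)]
    (par : ι → Finset ι) (ρ : ι → ℕ)
    (hacyc : ∀ i, ∀ j ∈ par i, ρ j < ρ i)
    (K : ∀ i, (∀ j, D j) → D i → ℝ≥0)
    (hloc : ∀ i, ∀ t t' : ∀ j, D j, (∀ j ∈ par i, t j = t' j) → ∀ v, K i t v = K i t' v)
    (hnorm : ∀ i, ∀ t : ∀ j, D j, ∑ v, K i t v = 1) :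
    ∀ n (A : Finset ι), A.card + n = Fintype.card ι →
      (∀ i ∈ A, ∀ j ∈ par i, j ∈ A) → ∀ u' : ∀ i, D i,
      ∑ u ∈ Finset.univ.filter (fun u : ∀ i, D i => ∀ j ∈ A, u j = u' j),
          ∏ i, K i u (u i) = ∏ i ∈ A, K i u' (u' i) := by
  intro n
  induction n with
  | zero =>
    intro A hcard hA u'
    have hAuniv : A = Finset.univ := Finset.eq_univ_of_card A (by simpa using hcard)
    subst hAuniv
    have hfil : Finset.univ.filter
        (fun u : ∀ i, D i => ∀ j ∈ (Finset.univ : Finset ι), u j = u' j) = {u'} := by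
      ext u
      simp [funext_iff]
    rw [hfil]
    simp
  | succ n ih =>
    intro A hcard hA u'
    have hne : (Finset.univ \ A).Nonempty := by
      rw [← Finset.card_pos, Finset.card_sdiff_of_subset (Finset.subset_univ A)]
      have := Finset.card_univ (α := ι)
      omega
    obtain ⟨i, hi, hmin⟩ := Finset.exists_min_image (Finset.univ \ A) ρ hne
    have hiA : i ∉ A := (Finset.mem_sdiff.mp hi).2
    have hA' : ∀ k ∈ insert i A, ∀ j ∈ par k, j ∈ insert i A := by
      intro k hk j hj
      rcases Finset.mem_insert.mp hk with rfl | hk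
      · by_contra hjI
        have hjA : j ∉ A := fun h => hjI (Finset.mem_insert_of_mem h)
        have : ρ k ≤ ρ j := hmin j (Finset.mem_sdiff.mpr ⟨Finset.mem_univ j, hjA⟩)
        exact absurd (hacyc k j hj) (not_lt.mpr this)
      · exact Finset.mem_insert_of_mem (hA k hk j hj)
    have hcard' : (insert i A).card + n = Fintype.card ι := by
      rw [Finset.card_insert_of_notMem hiA]; omega
    have hsplit :
        ∑ u ∈ Finset.univ.filter (fun u : ∀ i, D i => ∀ j ∈ A, u j = u' j),
            ∏ k, K k u (u k)
          = ∑ v : D i, ∑ u ∈ Finset.univ.filter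
              (fun u : ∀ i, D i => ∀ j ∈ insert i A, u j = Function.update u' i v j),
              ∏ k, K k u (u k) := by
      rw [← Finset.sum_fiberwise_of_maps_to (g := fun u : ∀ j, D j => u i)
            (fun x _ => Finset.mem_univ (x i))]
      apply Finset.sum_congr rfl
      intro v _
      congr 1
      ext u
      simp only [Finset.mem_filter, Finset.mem_univ, true_and]
      constructor
      · rintro ⟨h1, h2⟩ j hj
        rcases Finset.mem_insert.mp hj with rfl | hj2
        · rw [Function.update_self]; exact h2
        · rw [h1 j hj2, Function.update_of_ne (by intro h; subst h; exact hiA hj2)]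
      · intro h
        refine ⟨fun j hj3 => ?_, ?_⟩
        · rw [h j (Finset.mem_insert_of_mem hj3),
            Function.update_of_ne (by intro h; subst h; exact hiA hj3)]
        · have := h i (Finset.mem_insert_self i A)
          rwa [Function.update_self] at this
    rw [hsplit]
    have key : ∀ v : D i,
        ∑ u ∈ Finset.univ.filter
            (fun u : ∀ i, D i => ∀ j ∈ insert i A, u j = Function.update u' i v j),
            ∏ k, K k u (u k)
          = K i u' v * ∏ j ∈ A, K j u' (u' j) := by
      intro v
      rw [ih (insert i A) hcard' hA' (Function.update u' i v), Finset.prod_insert hiA]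
      congr 1
      · rw [Function.update_self]
        exact hloc i (Function.update u' i v) u'
          (fun j hj => Function.update_of_ne
            (by intro h; subst h; exact lt_irrefl _ (hacyc _ _ hj)) _ _) v
      · apply Finset.prod_congr rfl
        intro j hjA
        have hji : j ≠ i := by intro h; subst h; exact hiA hjA
        rw [Function.update_of_ne hji]
        exact hloc j _ u'
          (fun k hk => Function.update_of_ne
            (by intro h; subst h; exact hiA (hA j hjA k hk)) _ _) _
    calc ∑ v : D i, ∑ u ∈ Finset.univ.filter
            (fun u : ∀ i, D i => ∀ j ∈ insert i A, u j = Function.update u' i v j),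
            ∏ k, K k u (u k)
        = ∑ v : D i, K i u' v * ∏ j ∈ A, K j u' (u' j) := by
          exact Finset.sum_congr rfl fun v _ => key v
      _ = (∑ v : D i, K i u' v) * ∏ j ∈ A, K j u' (u' j) := by
          rw [Finset.sum_mul]
      _ = ∏ j ∈ A, K j u' (u' j) := by rw [hnorm]; ring

/-- **Exactness of the progressive-sampling conditional.**
For a discrete Bayesian network, a parent-closed set `N`, an attribute `i₀ ∉ N` with
`par i₀ ⊆ N`, an event `B` depending only on the coordinates in `N`, a region
`R ⊆ D i₀`, and a default assignment `t₀`: the probability that `T_{i₀} ∈ R` jointly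
with `B` equals the sum over configurations of `N` (encoded by fixing coordinates
outside `N` to `t₀`) of the configuration's probability times the conditional table
mass of `R` at that configuration. -/
theorem bayes_net_progressive_sampling_exact
    {ι : Type*} [Fintype ι] [DecidableEq ι]
    (D : ι → Type*) [∀ i, Fintype (D i)] [∀ i, Nonempty (D i)] [∀ i, DecidableEq (D i)]
    (par : ι → Finset ι) (ρ : ι → ℕ)
    (hacyc : ∀ i, ∀ j ∈ par i, ρ j < ρ i)
    (K : ∀ i, (∀ j, D j) → D i → ℝ≥0)
    (hloc : ∀ i, ∀ t t' : ∀ j, D j, (∀ j ∈ par i, t j = t' j) → ∀ v, K i t v = K i t' v)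
    (hnorm : ∀ i, ∀ t : ∀ j, D j, ∑ v, K i t v = 1)
    (N : Finset ι) (hN : ∀ i ∈ N, ∀ j ∈ par i, j ∈ N)
    (i₀ : ι) (hi₀ : i₀ ∉ N) (hpar : par i₀ ⊆ N)
    (B : (∀ i, D i) → Prop) [DecidablePred B]
    (hB : ∀ u u' : ∀ i, D i, (∀ j ∈ N, u j = u' j) → (B u ↔ B u'))
    (R : Finset (D i₀)) (t₀ : ∀ i, D i) :
    ∑ u ∈ Finset.univ.filter (fun u : ∀ i, D i => B u ∧ u i₀ ∈ R),
        ∏ i, K i u (u i)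
      = ∑ u ∈ Finset.univ.filter
            (fun u : ∀ i, D i => B u ∧ ∀ j ∉ N, u j = t₀ j),
          (∑ w ∈ Finset.univ.filter (fun w : ∀ i, D i => ∀ j ∈ N, w j = u j),
              ∏ i, K i w (w i)) *
            ∑ v ∈ R, K i₀ u v := by
  classical
  have marg : ∀ (A : Finset ι), (∀ i ∈ A, ∀ j ∈ par i, j ∈ A) → ∀ u' : ∀ i, D i,
      ∑ u ∈ Finset.univ.filter (fun u : ∀ i, D i => ∀ j ∈ A, u j = u' j),
          ∏ i, K i u (u i) = ∏ i ∈ A, K i u' (u' i) := by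
    intro A hA u'
    have hle : A.card ≤ Fintype.card ι := by
      simpa using Finset.card_le_univ A
    exact bn_marginal_aux D par ρ hacyc K hloc hnorm (Fintype.card ι - A.card) A
      (by omega) hA u'
  have hNi : ∀ k ∈ insert i₀ N, ∀ j ∈ par k, j ∈ insert i₀ N := by
    intro k hk j hj
    rcases Finset.mem_insert.mp hk with rfl | hk
    · exact Finset.mem_insert_of_mem (hpar hj)
    · exact Finset.mem_insert_of_mem (hN k hk j hj)
  have per : ∀ u' : ∀ i, D i,
      ∑ u ∈ Finset.univ.filter
          (fun u : ∀ i, D i => (∀ j ∈ N, u j = u' j) ∧ u i₀ ∈ R),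
          ∏ i, K i u (u i)
        = (∑ w ∈ Finset.univ.filter (fun w : ∀ i, D i => ∀ j ∈ N, w j = u' j),
            ∏ i, K i w (w i)) * ∑ v ∈ R, K i₀ u' v := by
    intro u'
    have hsplit :
        ∑ u ∈ Finset.univ.filter
            (fun u : ∀ i, D i => (∀ j ∈ N, u j = u' j) ∧ u i₀ ∈ R),
            ∏ i, K i u (u i)
          = ∑ v ∈ R, ∑ u ∈ Finset.univ.filter
              (fun u : ∀ i, D i => ∀ j ∈ insert i₀ N, u j = Function.update u' i₀ v j),
              ∏ k, K k u (u k) := by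
      rw [← Finset.sum_fiberwise_of_maps_to (g := fun u : ∀ j, D j => u i₀)
            (fun x hx => (Finset.mem_filter.mp hx).2.2)]
      apply Finset.sum_congr rfl
      intro v hv
      congr 1
      ext u
      simp only [Finset.mem_filter, Finset.mem_univ, true_and]
      constructor
      · rintro ⟨⟨h1, _⟩, h2⟩ j hj
        rcases Finset.mem_insert.mp hj with rfl | hj2
        · rw [Function.update_self]; exact h2
        · rw [h1 j hj2, Function.update_of_ne (by intro h; subst h; exact hi₀ hj2)]
      · intro h
        have hv0 : u i₀ = v := by
          have := h i₀ (Finset.mem_insert_self i₀ N)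
          rwa [Function.update_self] at this
        refine ⟨⟨fun j hj3 => ?_, hv0 ▸ hv⟩, hv0⟩
        rw [h j (Finset.mem_insert_of_mem hj3),
          Function.update_of_ne (by intro h; subst h; exact hi₀ hj3)]
    rw [hsplit, marg N hN u']
    have key : ∀ v : D i₀,
        ∑ u ∈ Finset.univ.filter
            (fun u : ∀ i, D i => ∀ j ∈ insert i₀ N, u j = Function.update u' i₀ v j),
            ∏ k, K k u (u k)
          = K i₀ u' v * ∏ j ∈ N, K j u' (u' j) := by
      intro v
      rw [marg (insert i₀ N) hNi (Function.update u' i₀ v), Finset.prod_insert hi₀]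
      congr 1
      · rw [Function.update_self]
        exact hloc i₀ (Function.update u' i₀ v) u'
          (fun j hj => Function.update_of_ne
            (by intro h; subst h; exact lt_irrefl _ (hacyc _ _ hj)) _ _) v
      · apply Finset.prod_congr rfl
        intro j hjA
        have hji : j ≠ i₀ := by intro h; subst h; exact hi₀ hjA
        rw [Function.update_of_ne hji]
        exact hloc j _ u'
          (fun k hk => Function.update_of_ne
            (by intro h; subst h; exact hi₀ (hN j hjA k hk)) _ _) _
    calc ∑ v ∈ R, ∑ u ∈ Finset.univ.filter
            (fun u : ∀ i, D i => ∀ j ∈ insert i₀ N, u j = Function.update u' i₀ v j),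
            ∏ k, K k u (u k)
        = ∑ v ∈ R, K i₀ u' v * ∏ j ∈ N, K j u' (u' j) :=
          Finset.sum_congr rfl fun v _ => key v
      _ = (∏ j ∈ N, K j u' (u' j)) * ∑ v ∈ R, K i₀ u' v := by
          rw [Finset.mul_sum]
          exact Finset.sum_congr rfl fun v _ => mul_comm _ _
  -- outer decomposition
  set g : (∀ i, D i) → (∀ i, D i) :=
    fun u j => if j ∈ N then u j else t₀ j with hg
  have hmaps : ∀ x ∈ Finset.univ.filter (fun u : ∀ i, D i => B u ∧ u i₀ ∈ R),
      g x ∈ Finset.univ.filter (fun u : ∀ i, D i => B u ∧ ∀ j ∉ N, u j = t₀ j) := by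
    intro x hx
    simp only [Finset.mem_filter, Finset.mem_univ, true_and] at hx ⊢
    refine ⟨(hB x (g x) (fun j hj => by simp [hg, hj])).mp hx.1,
      fun j hj => by simp [hg, hj]⟩
  rw [← Finset.sum_fiberwise_of_maps_to hmaps]
  apply Finset.sum_congr rfl
  intro u' hu'
  have hu'' := Finset.mem_filter.mp hu'
  have hfe : (Finset.univ.filter (fun u : ∀ i, D i => B u ∧ u i₀ ∈ R)).filter
        (fun u => g u = u')
      = Finset.univ.filter
          (fun u : ∀ i, D i => (∀ j ∈ N, u j = u' j) ∧ u i₀ ∈ R) := by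
    ext u
    simp only [Finset.mem_filter, Finset.mem_univ, true_and]
    constructor
    · rintro ⟨⟨hBu, hR⟩, hgu⟩
      refine ⟨fun j hj => ?_, hR⟩
      rw [← hgu]; simp [hg, hj]
    · rintro ⟨hag, hR⟩
      refine ⟨⟨(hB u u' hag).mpr hu''.2.1, hR⟩, funext fun j => ?_⟩
      by_cases hj : j ∈ N
      · simp [hg, hj, hag j hj]
      · simp [hg, hj, (hu''.2.2 j hj).symm]
  rw [hfe, per u']
end

section
/- (Normalization of the reduced network.) Let (ι, D, par, ρ, K) be a discrete Bayesian network, let A ⊆ ι be parent-closed, and fix a default full assignment t₀. Then the reduced network on A is itself a probability distribution: ∑ over full assignments u with u i = t₀ i for all i ∉ A of ∏_{i ∈ A} K i u (u i) equals 1. -/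
open scoped NNReal
open Finset

/-- **Normalization of the reduced network.**
For a discrete Bayesian network and a parent-closed set `A`, the reduced network on `A`
(encoded by fixing coordinates outside `A` to a default assignment `t₀`) is itself a
probability distribution: its total mass is `1`. -/
theorem bayes_net_reduced_network_normalized
    {ι : Type*} [Fintype ι] [DecidableEq ι]
    (D : ι → Type*) [∀ i, Fintype (D i)] [∀ i, Nonempty (D i)] [∀ i, DecidableEq (D i)]
    (par : ι → Finset ι) (ρ : ι → ℕ)
    (hacyc : ∀ i, ∀ j ∈ par i, ρ j < ρ i)
    (K : ∀ i, (∀ j, D j) → D i → ℝ≥0)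
    (hloc : ∀ i, ∀ t t' : ∀ j, D j, (∀ j ∈ par i, t j = t' j) → ∀ v, K i t v = K i t' v)
    (hnorm : ∀ i, ∀ t : ∀ j, D j, ∑ v, K i t v = 1)
    (A : Finset ι) (hA : ∀ i ∈ A, ∀ j ∈ par i, j ∈ A)
    (t₀ : ∀ i, D i) :
    ∑ u ∈ Finset.univ.filter (fun u : ∀ i, D i => ∀ i ∉ A, u i = t₀ i),
        ∏ i ∈ A, K i u (u i) = 1 := by
  classical
  revert hA
  induction A using Finset.strongInduction with
  | _ A ih =>
  intro hA
  rcases A.eq_empty_or_nonempty with rfl | hne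
  · have hfe : (Finset.univ.filter (fun u : ∀ i, D i => ∀ i ∉ (∅ : Finset ι), u i = t₀ i))
        = {t₀} := by
      ext u
      simp [funext_iff]
    rw [hfe]
    simp
  · obtain ⟨i, hiA, hmax⟩ := Finset.exists_max_image A ρ hne
    set A' := A.erase i with hA'def
    have hss : A' ⊂ A := Finset.erase_ssubset hiA
    have hA'closed : ∀ k ∈ A', ∀ j ∈ par k, j ∈ A' := by
      intro k hk j hj
      have hkA := Finset.mem_of_mem_erase hk
      have hjA := hA k hkA j hj
      refine Finset.mem_erase.mpr ⟨?_, hjA⟩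
      rintro rfl
      exact absurd (hmax k hkA) (not_le.mpr (hacyc k _ hj))
    have hinotpar : ∀ k ∈ A, i ∉ par k := by
      intro k hk hik
      exact absurd (hmax k hk) (not_le.mpr (hacyc k i hik))
    have IH := ih A' hss hA'closed
    have key : ∑ u ∈ Finset.univ.filter (fun u : ∀ i, D i => ∀ j ∉ A, u j = t₀ j),
        ∏ k ∈ A, K k u (u k)
      = ∑ p ∈ (Finset.univ.filter (fun u : ∀ i, D i => ∀ j ∉ A', u j = t₀ j)) ×ˢ
          (Finset.univ : Finset (D i)),
        ∏ k ∈ A, K k (Function.update p.1 i p.2) (Function.update p.1 i p.2 k) := by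
      refine Finset.sum_nbij' (fun u => (Function.update u i (t₀ i), u i))
        (fun p => Function.update p.1 i p.2) ?_ ?_ ?_ ?_ ?_
      · intro u hu
        simp only [Finset.mem_filter, Finset.mem_univ, true_and] at hu ⊢
        refine Finset.mem_product.mpr ⟨?_, Finset.mem_univ _⟩
        simp only [Finset.mem_filter, Finset.mem_univ, true_and]
        intro j hj
        by_cases hji : j = i
        · subst hji; simp
        · rw [Function.update_of_ne hji]
          exact hu j (fun hjA => hj (Finset.mem_erase.mpr ⟨hji, hjA⟩))
      · intro p hp
        rw [Finset.mem_product] at hp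
        simp only [Finset.mem_filter, Finset.mem_univ, true_and] at hp ⊢
        intro j hj
        have hji : j ≠ i := fun h => hj (h ▸ hiA)
        rw [Function.update_of_ne hji]
        exact hp.1 j (fun hjA' => hj (Finset.mem_of_mem_erase hjA'))
      · intro u hu
        funext j
        by_cases hji : j = i
        · subst hji; simp
        · simp [Function.update_of_ne hji]
      · intro p hp
        rw [Finset.mem_product] at hp
        simp only [Finset.mem_filter, Finset.mem_univ, true_and] at hp
        have h1 : p.1 i = t₀ i := hp.1 i (Finset.notMem_erase i A)
        show (Function.update (Function.update p.1 i p.2) i (t₀ i),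
            Function.update p.1 i p.2 i) = p
        have h2 : Function.update (Function.update p.1 i p.2) i (t₀ i) = p.1 := by
          funext j
          by_cases hji : j = i
          · subst hji; simpa using h1.symm
          · simp [Function.update_of_ne hji]
        rw [h2, Function.update_self]
      · intro u hu
        have hEq : Function.update (Function.update u i (t₀ i)) i (u i) = u := by
          funext j
          by_cases hji : j = i
          · subst hji; simp
          · simp [Function.update_of_ne hji]
        show ∏ k ∈ A, K k u (u k)
            = ∏ k ∈ A, K k (Function.update (Function.update u i (t₀ i)) i (u i))
                (Function.update (Function.update u i (t₀ i)) i (u i) k)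
        rw [hEq]
    rw [key, Finset.sum_product]
    have step : ∀ u' ∈ Finset.univ.filter (fun u : ∀ i, D i => ∀ j ∉ A', u j = t₀ j),
        (∑ v, ∏ k ∈ A, K k (Function.update u' i v) (Function.update u' i v k))
        = ∏ k ∈ A', K k u' (u' k) := by
      intro u' hu'
      have hterm : ∀ v, ∏ k ∈ A, K k (Function.update u' i v) (Function.update u' i v k)
          = K i u' v * ∏ k ∈ A', K k u' (u' k) := by
        intro v
        rw [← Finset.mul_prod_erase A _ hiA]
        congr 1
        · rw [Function.update_self]
          refine hloc i _ _ (fun j hj => ?_) v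
          refine Function.update_of_ne (fun h => ?_) _ _
          exact hinotpar i hiA (h ▸ hj)
        · refine Finset.prod_congr rfl (fun k hk => ?_)
          have hki : k ≠ i := Finset.ne_of_mem_erase hk
          rw [Function.update_of_ne hki]
          refine hloc k _ _ (fun j hj => ?_) (u' k)
          refine Function.update_of_ne (fun h => ?_) _ _
          exact (Finset.mem_erase.mp (hA'closed k hk j hj)).1 h
      simp only [hterm]
      rw [← Finset.sum_mul, hnorm, one_mul]
    calc ∑ u' ∈ Finset.univ.filter (fun u : ∀ i, D i => ∀ j ∉ A', u j = t₀ j),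
          ∑ v, ∏ k ∈ A, K k (Function.update u' i v) (Function.update u' i v k)
        = ∑ u' ∈ Finset.univ.filter (fun u : ∀ i, D i => ∀ j ∉ A', u j = t₀ j),
          ∏ k ∈ A', K k u' (u' k) := Finset.sum_congr rfl step
      _ = 1 := IH
end

section
/- (Theorem 2, single-node case: downweighting by fanout on the full outer join.) Let A : Finset α and B : Finset β be finite tables and J : α → β → Prop a decidable join condition; for a ∈ A let f a = |{b ∈ B : J a b}| be its fanout. Define the full outer join Ω as the finite set of pairs in Option α × Option β consisting of: all (some a, some b) with a ∈ A, b ∈ B, and J a b; all (some a, none) with a ∈ A and f a = 0; and all (none, some b) with b ∈ B such that no a ∈ A satisfies J a b. Given a decidable predicate Q on α, extend it to Ω by Q'(some a, _) = Q a and Q'(none, _) = False, and define the fanout attribute F on Ω by F(some a, _) = f a and F(none, _) = 0. Then, with the sum taken in ℝ (or ℚ), ∑ over ω ∈ Ω with Q' ω of 1 / max(F ω, 1) equals the cardinality |{a ∈ A : Q a}|; that is, the true cardinality of a query touching only table A is recovered from the full outer join by downweighting each row by the reciprocal of (the maximum of 1 and) its fanout. -/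
open Finset

/-!
A row of the full outer join with non-null `A`-part `a` is either one of the `f a` matching
pairs `(a, b)` or, when `f a = 0`, the single padded row `(a, null)`. So `a` occurs in exactly
`max (f a) 1` rows, and a weight depending only on the `A`-part, vanishing on null, sums over
the join to `∑ a ∈ A, max (f a) 1 • w a`. The weight `1 / max (f a) 1` therefore counts each
`a` once.
-/

namespace FullOuterJoin

variable {α β : Type*}

def fanout (B : Finset β) (J : α → β → Prop) [∀ a b, Decidable (J a b)] (a : α) : ℕ :=
  (B.filter (fun b => J a b)).card

section Join

variable [DecidableEq α] [DecidableEq β]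
  (A : Finset α) (B : Finset β) (J : α → β → Prop) [∀ a b, Decidable (J a b)]

def matched : Finset (Option α × Option β) :=
  ((A ×ˢ B).filter (fun p => J p.1 p.2)).image (fun p => (some p.1, some p.2))

def leftUnmatched : Finset (Option α × Option β) :=
  (A.filter (fun a => fanout B J a = 0)).image (fun a => (some a, none))

def rightUnmatched : Finset (Option α × Option β) :=
  (B.filter (fun b => ∀ a ∈ A, ¬ J a b)).image (fun b => (none, some b))

def fullOuterJoin : Finset (Option α × Option β) :=
  matched A B J ∪ leftUnmatched A B J ∪ rightUnmatched A B J

theorem disjoint_matched_leftUnmatched : Disjoint (matched A B J) (leftUnmatched A B J) := by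
  simp only [matched, leftUnmatched, disjoint_left, mem_image]
  rintro _ ⟨p, -, rfl⟩ ⟨a, -, h⟩
  simp at h

theorem disjoint_union_rightUnmatched :
    Disjoint (matched A B J ∪ leftUnmatched A B J) (rightUnmatched A B J) := by
  simp only [matched, leftUnmatched, rightUnmatched, disjoint_left, mem_union, mem_image]
  rintro _ (⟨p, -, rfl⟩ | ⟨a, -, rfl⟩) ⟨b, -, h⟩ <;> simp at h

variable {M : Type*} [AddCommMonoid M]

theorem sum_matched (g : Option α → M) :
    ∑ ω ∈ matched A B J, g ω.1 = ∑ a ∈ A, fanout B J a • g (some a) := by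
  rw [matched, sum_image (by rintro ⟨a, b⟩ - ⟨a', b'⟩ - h; simpa using h), sum_filter,
    sum_product]
  refine sum_congr rfl fun a _ => ?_
  simp only [← sum_filter, sum_const, fanout]

theorem sum_leftUnmatched (g : Option α → M) :
    ∑ ω ∈ leftUnmatched A B J, g ω.1 =
      ∑ a ∈ A, if fanout B J a = 0 then g (some a) else 0 := by
  rw [leftUnmatched, sum_image (by rintro a - a' - h; simpa using h), sum_filter]

theorem sum_rightUnmatched (g : Option α → M) (hg : g none = 0) :
    ∑ ω ∈ rightUnmatched A B J, g ω.1 = 0 := by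
  rw [rightUnmatched, sum_image (by rintro b - b' - h; simpa using h)]
  exact sum_eq_zero fun _ _ => hg

theorem sum_fullOuterJoin (g : Option α → M) (hg : g none = 0) :
    ∑ ω ∈ fullOuterJoin A B J, g ω.1 = ∑ a ∈ A, max (fanout B J a) 1 • g (some a) := by
  rw [fullOuterJoin, sum_union (disjoint_union_rightUnmatched A B J),
    sum_union (disjoint_matched_leftUnmatched A B J), sum_matched, sum_leftUnmatched,
    sum_rightUnmatched A B J g hg, add_zero, ← sum_add_distrib]
  refine sum_congr rfl fun a _ => ?_
  rcases Nat.eq_zero_or_pos (fanout B J a) with h | h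
  · simp [h]
  · simp [h.ne', max_eq_left (Nat.succ_le_of_lt h)]

end Join

end FullOuterJoin

theorem max_one_nsmul_one_div_max_one (n : ℕ) :
    max n 1 • ((1 : ℝ) / ((max n 1 : ℕ) : ℝ)) = 1 := by
  rw [nsmul_eq_mul]
  exact mul_one_div_cancel (Nat.cast_ne_zero.mpr (by omega))

/-- **Theorem 2, single-node case: downweighting by fanout on the full
outer join.**  Let `f a` be the fanout of `a ∈ A` into `B`, and let `Ω` be the full
outer join of `A` and `B` (matching pairs, plus `A`-rows with no match padded with
`none`, plus `B`-rows with no match padded with `none`).  A predicate `Q` on `A` is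
extended to `Ω` by failing on rows with null `A`-part, and the fanout attribute on a
row is the fanout of its `A`-part (and `0` on null `A`-part).  Then summing
`1 / max(F ω, 1)` over the rows of `Ω` satisfying the extended predicate recovers the
true cardinality `|{a ∈ A : Q a}|`. -/
theorem full_outer_join_fanout_downweighting
    {α β : Type*} [DecidableEq α] [DecidableEq β]
    (A : Finset α) (B : Finset β)
    (J : α → β → Prop) [∀ a b, Decidable (J a b)]
    (Q : α → Prop) [DecidablePred Q]
    (f : α → ℕ) (hf : ∀ a, f a = (B.filter (fun b => J a b)).card)
    (Ω : Finset (Option α × Option β))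
    (hΩ : Ω = (((A ×ˢ B).filter (fun p => J p.1 p.2)).image
                  (fun p => (some p.1, some p.2)))
            ∪ ((A.filter (fun a => f a = 0)).image (fun a => (some a, none)))
            ∪ ((B.filter (fun b => ∀ a ∈ A, ¬ J a b)).image
                  (fun b => (none, some b)))) :
    (∑ ω ∈ Ω,
        (match ω.1 with
          | some a => if Q a then (1 : ℝ) / ((max (f a) 1 : ℕ) : ℝ) else 0
          | none => 0))
      = ((A.filter Q).card : ℝ) := by
  obtain rfl : f = FullOuterJoin.fanout B J := funext hf
  obtain rfl : Ω = FullOuterJoin.fullOuterJoin A B J := hΩ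
  refine (FullOuterJoin.sum_fullOuterJoin A B J
      (fun o => match o with
        | some a => if Q a then (1 : ℝ) / ((max (FullOuterJoin.fanout B J a) 1 : ℕ) : ℝ) else 0
        | none => 0) rfl).trans ?_
  rw [card_filter, Nat.cast_sum]
  refine sum_congr rfl fun a _ => ?_
  dsimp only
  split_ifs
  · exact_mod_cast max_one_nsmul_one_div_max_one _
  · simp
end

section
/- (Correctness of compiled variable elimination on a chain.) Let n : ℕ, let S k be a finite nonempty state space for each k = 0, 1, …, n, let π : S 0 → ℝ≥0 be an initial weight vector, let M k : S (k+1) → S k → ℝ≥0 be transition matrices for k = 0, …, n−1, and let R k ⊆ S k be query regions. Define vectors recursively by v 0 x = π x if x ∈ R 0 and v 0 x = 0 otherwise, and v (k+1) y = ∑_{x : S k} M k y x · v k x if y ∈ R (k+1) and v (k+1) y = 0 otherwise. Then the column sum of the final vector computes the constrained trajectory sum: ∑_{y : S n} v n y = ∑ over all trajectories t with t k ∈ S k and t k ∈ R k for every k of π (t 0) · ∏_{k=0}^{n−1} M k (t (k+1)) (t k). -/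
/-!
Induct on `n` with an arbitrary weight `w` on the last state: `∑ x, w x * VEvec n x` is the sum,
over trajectories through the regions, of `w` at the last state times the trajectory weight.
One elimination step moves the last transition `M n y x` into the weight, and splitting a
trajectory into its first `n + 1` states and its last one (`Fin.snoc`) matches the two sides.
The theorem is the case `w = 1`.
-/

open scoped NNReal
open Finset

/-- The compiled variable-elimination program on a chain: `VEvec S π M R k` is the
vector obtained after processing attributes `0, …, k`, slicing by the query regions
`R` at each step. -/
noncomputable def VEvec (S : ℕ → Type) [∀ k, Fintype (S k)] [∀ k, DecidableEq (S k)]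
    (π : S 0 → ℝ≥0) (M : ∀ k, S (k + 1) → S k → ℝ≥0) (R : ∀ k, Finset (S k)) :
    ∀ k, S k → ℝ≥0
  | 0 => fun x => if x ∈ R 0 then π x else 0
  | (k + 1) => fun y =>
      if y ∈ R (k + 1) then ∑ x, M k y x * VEvec S π M R k x else 0

@[to_additive]
theorem Fin.prod_piFinset_snoc {β : Type*} [CommMonoid β] {n : ℕ} {α : Fin (n + 1) → Type*}
    (s : ∀ i, Finset (α i)) (f : (∀ i, α i) → β) :
    ∏ t ∈ Fintype.piFinset s, f t =
      ∏ x ∈ s (Fin.last n), ∏ t ∈ Fintype.piFinset (Fin.init s), f (Fin.snoc t x) := by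
  rw [← prod_product']
  refine (prod_equiv (Fin.snocEquiv α) (fun ⟨x, t⟩ => ?_) fun _ _ => rfl).symm
  simp only [mem_product]
  conv_rhs => rw [← Fin.snoc_init_self s]
  exact Fin.snoc_mem_piFinset_snoc.symm

section

variable {S : ℕ → Type} (π : S 0 → ℝ≥0) (M : ∀ k, S (k + 1) → S k → ℝ≥0)

noncomputable def chainWeight {n : ℕ} (t : (k : Fin (n + 1)) → S k) : ℝ≥0 :=
  π (t 0) * ∏ k : Fin n, M k (t k.succ) (t k.castSucc)

theorem chainWeight_snoc {n : ℕ} (t : (k : Fin (n + 1)) → S k) (y : S (n + 1)) :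
    chainWeight π M (Fin.snoc (α := fun k : Fin (n + 2) => S k) t y) =
      chainWeight π M t * M n y (t (Fin.last n)) := by
  have snoc_succ (i : Fin n) :
      (Fin.snoc (α := fun k : Fin (n + 2) => S k) t y i.castSucc.succ : S (i + 1)) = t i.succ :=
    Fin.snoc_castSucc (α := fun k : Fin (n + 2) => S k) (i := i.succ) ..
  simp only [chainWeight, Fin.prod_univ_castSucc, ← Fin.castSucc_zero, Fin.snoc_castSucc,
    snoc_succ, Fin.succ_last, Fin.snoc_last, mul_assoc]
  rfl

variable [∀ k, Fintype (S k)] [∀ k, DecidableEq (S k)] (R : ∀ k, Finset (S k))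

theorem sum_mul_VEvec (n : ℕ) (w : S n → ℝ≥0) :
    ∑ x, w x * VEvec S π M R n x =
      ∑ t ∈ Fintype.piFinset (fun k : Fin (n + 1) => R k),
        w (t (Fin.last n)) * chainWeight π M t := by
  induction n with
  | zero =>
    rw [Fin.sum_piFinset_snoc]
    simp only [VEvec, chainWeight, mul_ite, mul_zero, sum_ite_mem, univ_inter,
      Fintype.piFinset_of_isEmpty, univ_unique, sum_singleton, Fin.prod_univ_zero, mul_one]
    -- `(0 : Fin 1)` is `Fin.last 0`, so `Fin.snoc default x` evaluates to `x` there
    rfl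
  | succ n ih =>
    calc ∑ y, w y * VEvec S π M R (n + 1) y
        = ∑ y ∈ R (n + 1), ∑ x, (w y * M n y x) * VEvec S π M R n x := by
          simp only [VEvec, mul_ite, mul_zero, sum_ite_mem, univ_inter, mul_sum, mul_assoc]
      _ = ∑ y ∈ R (n + 1), ∑ t ∈ Fintype.piFinset (fun k : Fin (n + 1) => R k),
            w y * (chainWeight π M t * M n y (t (Fin.last n))) := by
          refine sum_congr rfl fun y _ => ?_
          rw [ih]
          exact sum_congr rfl fun t _ => by ring
      _ = _ := by
          rw [Fin.sum_piFinset_snoc]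
          simp only [Fin.snoc_last, chainWeight_snoc]
          rfl

end

/-- **Correctness of compiled variable elimination on a chain.**
For a chain-structured Bayesian network with finite nonempty state spaces `S k`,
initial weights `π`, transition matrices `M k`, and query regions `R k`, the column sum
of the final vector of the compiled variable-elimination program equals the constrained
trajectory sum
`∑_{t : ∀ k, t k ∈ R k} π (t 0) · ∏_{k < n} M k (t (k+1)) (t k)`. -/
theorem compiled_variable_elimination_correct
    (n : ℕ) (S : ℕ → Type)
    [∀ k, Fintype (S k)] [∀ k, DecidableEq (S k)]
    (π : S 0 → ℝ≥0) (M : ∀ k, S (k + 1) → S k → ℝ≥0) (R : ∀ k, Finset (S k)) :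
    ∑ y, VEvec S π M R n y
      = ∑ t ∈ Finset.univ.filter
            (fun t : (k : Fin (n + 1)) → S k => ∀ k : Fin (n + 1), t k ∈ R k),
          π (t ⟨0, Nat.succ_pos n⟩) *
            ∏ k : Fin n,
              M k (t ⟨k.val + 1, by omega⟩) (t ⟨k.val, by omega⟩) := by
  have regions :
      univ.filter (fun t : (k : Fin (n + 1)) → S k => ∀ k : Fin (n + 1), t k ∈ R k) =
        Fintype.piFinset fun k : Fin (n + 1) => R k := by
    ext t
    simp [Fintype.mem_piFinset]
  have unweighted := sum_mul_VEvec π M R n 1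
  simp only [Pi.one_apply, one_mul] at unweighted
  rw [unweighted, regions]
  rfl
end
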